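/- arXiv:1201.1796 — 2 statements merged into one kernel-verified Lean document; each statement's English description precedes it below -/
import Mathlib

section
/- For a regular sequential method G on a topological group X, the G-sequentially connected component K of the identity element 0 is a G-sequentially closed normal subgroup of X. -/
open Filter Topology Pointwise

/-- A method of sequential convergence on an additive group `X`: an additive
function defined on a subgroup of the group of `X`-valued sequences. -/
structure SeqMethod (X : Type*) [AddGroup X] where
  dom : AddSubgroup (ℕ → X)
  toFun : dom →+ X

namespace SeqMethod

variable {X : Type*} [AddGroup X]

/-- `s` G-converges to `l`. -/
def Converges (M : SeqMethod X) (s : ℕ → X) (l : X) : Prop :=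
  ∃ h : s ∈ M.dom, M.toFun ⟨s, h⟩ = l

/-- The G-sequential closure of `A`. -/
def GClosure (M : SeqMethod X) (A : Set X) : Set X :=
  {l | ∃ s : ℕ → X, (∀ n, s n ∈ A) ∧ M.Converges s l}

/-- `A` is G-sequentially closed. -/
def GClosed (M : SeqMethod X) (A : Set X) : Prop := M.GClosure A ⊆ A

/-- `A` is G-sequentially open. -/
def GOpen (M : SeqMethod X) (A : Set X) : Prop := M.GClosed Aᶜ

/-- `M` is regular: every convergent sequence G-converges to its limit. -/
def Regular [TopologicalSpace X] (M : SeqMethod X) : Prop :=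
  ∀ (s : ℕ → X) (l : X), Tendsto s atTop (𝓝 l) → M.Converges s l

/-- `A` is G-sequentially connected: `A` is nonempty and there are no nonempty
disjoint G-sequentially closed subsets of `X`, each meeting `A`, covering `A`. -/
def GConnected (M : SeqMethod X) (A : Set X) : Prop :=
  A.Nonempty ∧ ¬ ∃ U V : Set X, M.GClosed U ∧ M.GClosed V ∧
    (U ∩ A).Nonempty ∧ (V ∩ A).Nonempty ∧ Disjoint U V ∧ A ⊆ U ∪ V

/-- The G-sequentially connected component of `x` inside a subset `A`. -/
def ComponentIn (M : SeqMethod X) (A : Set X) (x : X) : Set X :=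
  ⋃₀ {C : Set X | x ∈ C ∧ C ⊆ A ∧ M.GConnected C}

/-- The G-sequentially connected component of `x` in `X`. -/
def Component (M : SeqMethod X) (x : X) : Set X :=
  ⋃₀ {C : Set X | x ∈ C ∧ M.GConnected C}

/-- `f` is G-sequentially continuous on `X`. -/
def GCont (M : SeqMethod X) (f : X → X) : Prop :=
  ∀ (s : ℕ → X) (u : X), M.Converges s u → M.Converges (fun n => f (s n)) (f u)

/-- `f` is G-sequentially continuous on the subset `A`. -/
def GContOn (M : SeqMethod X) (f : X → X) (A : Set X) : Prop :=
  ∀ (s : ℕ → X) (u : X), (∀ n, s n ∈ A) → u ∈ A →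
    M.Converges s u → M.Converges (fun n => f (s n)) (f u)

/-- `F` is G-sequentially closed in `A`. -/
def GClosedIn (M : SeqMethod X) (A F : Set X) : Prop :=
  ∃ U : Set X, M.GClosed U ∧ F = U ∩ A

/-- `V` is G-sequentially open in `A`. -/
def GOpenIn (M : SeqMethod X) (A V : Set X) : Prop :=
  V ⊆ A ∧ M.GClosedIn A (A \ V)

/-- The set of G-sequentially connected components of points of `A`. -/
def pi0 (M : SeqMethod X) (A : Set X) : Set (Set X) :=
  {C : Set X | ∃ x ∈ A, C = M.ComponentIn A x}

/-- `X` is G-sequentially locally connected. -/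
def GLocConn (M : SeqMethod X) : Prop :=
  ∀ (x : X) (U : Set X), M.GOpen U → x ∈ U →
    ∃ V : Set X, M.GConnected V ∧ (∃ O : Set X, M.GOpen O ∧ x ∈ O ∧ O ⊆ V) ∧
      x ∈ V ∧ V ⊆ U

/-- A subset `A` is G-sequentially locally connected (with the relative
G-sequentially open sets). -/
def GLocConnOn (M : SeqMethod X) (A : Set X) : Prop :=
  ∀ a ∈ A, ∀ U : Set X, M.GOpenIn A U → a ∈ U →
    ∃ V : Set X, M.GConnected V ∧ (∃ O : Set X, M.GOpenIn A O ∧ a ∈ O ∧ O ⊆ V) ∧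
      a ∈ V ∧ V ⊆ U

end SeqMethod

open SeqMethod

variable {X : Type*} [AddGroup X] [TopologicalSpace X] [IsTopologicalAddGroup X]
  [FirstCountableTopology X] [T2Space X]

/-!
The closure of a G-sequentially connected set is G-sequentially connected, so the component `K`
of `0` contains its own G-closure. G-sequentially continuous maps send the component of `x` into
the component of `f x`. Applied to `z ↦ x - z`, which sends `0` to `x`, whose component is `K`
when `x ∈ K`, this gives `x - K ⊆ K`; applied to `z ↦ a + z - a`, which fixes `0`, it gives
normality.
-/

namespace SeqMethod

section

variable {Y : Type*} [AddGroup Y] {M : SeqMethod Y}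

theorem Converges.add {s t : ℕ → Y} {u v : Y} (hs : M.Converges s u)
    (ht : M.Converges t v) : M.Converges (fun n => s n + t n) (u + v) := by
  obtain ⟨hs, rfl⟩ := hs
  obtain ⟨ht, rfl⟩ := ht
  exact ⟨add_mem hs ht, map_add M.toFun ⟨s, hs⟩ ⟨t, ht⟩⟩

theorem Converges.sub {s t : ℕ → Y} {u v : Y} (hs : M.Converges s u)
    (ht : M.Converges t v) : M.Converges (fun n => s n - t n) (u - v) := by
  obtain ⟨hs, rfl⟩ := hs
  obtain ⟨ht, rfl⟩ := ht
  exact ⟨sub_mem hs ht, map_sub M.toFun ⟨s, hs⟩ ⟨t, ht⟩⟩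

variable (M)

theorem gClosure_mono {A B : Set Y} (h : A ⊆ B) : M.GClosure A ⊆ M.GClosure B := by
  rintro l ⟨s, hs, hc⟩
  exact ⟨s, fun n => h (hs n), hc⟩

theorem gClosed_preimage {f : Y → Y} (hf : M.GCont f) {U : Set Y} (hU : M.GClosed U) :
    M.GClosed (f ⁻¹' U) := by
  rintro l ⟨s, hs, hc⟩
  exact hU ⟨fun n => f (s n), hs, hf s l hc⟩

theorem gConnected_singleton (x : Y) : M.GConnected {x} := by
  refine ⟨Set.singleton_nonempty x, ?_⟩
  rintro ⟨U, V, -, -, ⟨u, huU, rfl⟩, ⟨v, hvV, rfl⟩, hUV, -⟩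
  exact Set.disjoint_left.mp hUV huU hvV

variable {M}

theorem GConnected.image {f : Y → Y} (hf : M.GCont f) {A : Set Y} (hA : M.GConnected A) :
    M.GConnected (f '' A) := by
  obtain ⟨hne, hsep⟩ := hA
  refine ⟨hne.image f, ?_⟩
  rintro ⟨U, V, hU, hV, ⟨_, huU, a, ha, rfl⟩, ⟨_, hvV, b, hb, rfl⟩, hUV, hcover⟩
  exact hsep ⟨f ⁻¹' U, f ⁻¹' V, M.gClosed_preimage hf hU, M.gClosed_preimage hf hV,
    ⟨a, huU, ha⟩, ⟨b, hvV, hb⟩, hUV.preimage f, fun z hz => hcover ⟨z, hz, rfl⟩⟩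

theorem gConnected_sUnion {S : Set (Set Y)} (x : Y) (hx : ∀ C ∈ S, x ∈ C)
    (hS : ∀ C ∈ S, M.GConnected C) (hne : S.Nonempty) : M.GConnected (⋃₀ S) := by
  obtain ⟨C₀, hC₀⟩ := hne
  refine ⟨⟨x, C₀, hC₀, hx C₀ hC₀⟩, ?_⟩
  rintro ⟨U, V, hU, hV, ⟨u, huU, Cu, hCu, huC⟩, ⟨v, hvV, Cv, hCv, hvC⟩, hUV, hcover⟩
  rcases hcover ⟨C₀, hC₀, hx C₀ hC₀⟩ with hxU | hxV
  · exact (hS Cv hCv).2 ⟨U, V, hU, hV, ⟨x, hxU, hx Cv hCv⟩, ⟨v, hvV, hvC⟩, hUV,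
      fun z hz => hcover ⟨Cv, hCv, hz⟩⟩
  · exact (hS Cu hCu).2 ⟨U, V, hU, hV, ⟨u, huU, huC⟩, ⟨x, hxV, hx Cu hCu⟩, hUV,
      fun z hz => hcover ⟨Cu, hCu, hz⟩⟩

theorem mem_component_self (x : Y) : x ∈ M.Component x :=
  ⟨{x}, ⟨rfl, M.gConnected_singleton x⟩, rfl⟩

theorem GConnected.subset_component {C : Set Y} {x : Y} (hC : M.GConnected C) (hx : x ∈ C) :
    C ⊆ M.Component x :=
  fun _ hz => ⟨C, ⟨hx, hC⟩, hz⟩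

theorem gConnected_component (x : Y) : M.GConnected (M.Component x) :=
  gConnected_sUnion x (fun _ hC => hC.1) (fun _ hC => hC.2) ⟨{x}, rfl, M.gConnected_singleton x⟩

theorem component_eq {x y : Y} (h : y ∈ M.Component x) : M.Component y = M.Component x := by
  have hxy : M.Component x ⊆ M.Component y := (gConnected_component x).subset_component h
  exact hxy.antisymm' ((gConnected_component y).subset_component (hxy (mem_component_self x)))

theorem image_component_subset {f : Y → Y} (hf : M.GCont f) (x : Y) :
    f '' M.Component x ⊆ M.Component (f x) :=
  ((gConnected_component x).image hf).subset_component ⟨x, mem_component_self x, rfl⟩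

end

section Regular

variable {Y : Type*} [AddGroup Y] [TopologicalSpace Y] {M : SeqMethod Y}

theorem Regular.converges_const (hreg : M.Regular) (a : Y) : M.Converges (fun _ => a) a :=
  hreg _ _ tendsto_const_nhds

theorem Regular.gCont_const_sub (hreg : M.Regular) (a : Y) : M.GCont (fun z => a - z) :=
  fun _ _ hs => (hreg.converges_const a).sub hs

theorem Regular.gCont_conj (hreg : M.Regular) (a : Y) : M.GCont (fun z => a + z - a) :=
  fun _ _ hs => ((hreg.converges_const a).add hs).sub (hreg.converges_const a)

theorem Regular.subset_gClosure (hreg : M.Regular) (A : Set Y) : A ⊆ M.GClosure A :=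
  fun a ha => ⟨fun _ => a, fun _ => ha, hreg.converges_const a⟩

theorem GConnected.gClosure (hreg : M.Regular) {A : Set Y} (hA : M.GConnected A) :
    M.GConnected (M.GClosure A) := by
  obtain ⟨⟨a, ha⟩, hsep⟩ := hA
  refine ⟨⟨a, hreg.subset_gClosure A ha⟩, ?_⟩
  rintro ⟨U, V, hU, hV, ⟨u, huU, huA⟩, ⟨v, hvV, hvA⟩, hUV, hcover⟩
  have hA : A ⊆ U ∪ V := (hreg.subset_gClosure A).trans hcover
  have hUA : (U ∩ A).Nonempty := by
    by_contra h
    have hAV : A ⊆ V := fun z hz => (hA hz).resolve_left fun hzU => h ⟨z, hzU, hz⟩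
    exact Set.disjoint_left.mp hUV huU (hV (M.gClosure_mono hAV huA))
  have hVA : (V ∩ A).Nonempty := by
    by_contra h
    have hAU : A ⊆ U := fun z hz => (hA hz).resolve_right fun hzV => h ⟨z, hzV, hz⟩
    exact Set.disjoint_left.mp hUV (hU (M.gClosure_mono hAU hvA)) hvV
  exact hsep ⟨U, V, hU, hV, hUA, hVA, hUV, hA⟩

theorem gClosed_component (hreg : M.Regular) (x : Y) : M.GClosed (M.Component x) :=
  ((gConnected_component x).gClosure hreg).subset_component
    (hreg.subset_gClosure _ (mem_component_self x))

end Regular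

end SeqMethod

theorem component_zero_gClosed_normal_subgroup (M : SeqMethod X) (hreg : M.Regular) :
    M.GClosed (M.Component (0 : X)) ∧
    (0 : X) ∈ M.Component (0 : X) ∧
    (∀ x ∈ M.Component (0 : X), ∀ y ∈ M.Component (0 : X),
      x - y ∈ M.Component (0 : X)) ∧
    (∀ a : X, ∀ x ∈ M.Component (0 : X), a + x - a ∈ M.Component (0 : X)) := by
  refine ⟨gClosed_component hreg 0, mem_component_self 0, fun x hx y hy => ?_, fun a x hx => ?_⟩
  · have hxy := image_component_subset (hreg.gCont_const_sub x) 0 ⟨y, hy, rfl⟩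
    rwa [sub_zero, component_eq hx] at hxy
  · simpa using image_component_subset (hreg.gCont_conj a) 0 ⟨x, hx, rfl⟩
end

section
/- If G is a regular sequential method and A is a G-sequentially connected subset of X, then the G-sequential closure of A is G-sequentially connected. -/
open Filter Topology Pointwise

namespace SeqMethod

variable {X : Type*} [AddGroup X]

variable (M : SeqMethod X)

theorem subset_gClosure_of_regular [TopologicalSpace X] (hreg : M.Regular) (A : Set X) :
    A ⊆ M.GClosure A :=
  fun x hx => ⟨fun _ => x, fun _ => hx, hreg _ _ tendsto_const_nhds⟩

variable {M}

theorem GClosed.gClosure_subset {A U : Set X} (hU : M.GClosed U) (hAU : A ⊆ U) :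
    M.GClosure A ⊆ U :=
  fun _ ⟨s, hs, hconv⟩ => hU ⟨s, fun n => hAU (hs n), hconv⟩

theorem inter_nonempty_of_subset_gClosure {A B U V : Set X} (hV : M.GClosed V)
    (hAB : A ⊆ B) (hBA : B ⊆ M.GClosure A) (hUB : (U ∩ B).Nonempty)
    (hUV : Disjoint U V) (hcover : B ⊆ U ∪ V) : (U ∩ A).Nonempty := by
  by_contra hUA
  have hAV : A ⊆ V := fun x hx =>
    (hcover (hAB hx)).resolve_left fun hxU => hUA ⟨x, hxU, hx⟩
  obtain ⟨x, hxU, hxB⟩ := hUB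
  exact hUV.notMem_of_mem_left hxU (hV.gClosure_subset hAV (hBA hxB))

theorem GConnected.of_subset_of_subset_gClosure {A B : Set X} (hA : M.GConnected A)
    (hAB : A ⊆ B) (hBA : B ⊆ M.GClosure A) : M.GConnected B := by
  refine ⟨hA.1.mono hAB, ?_⟩
  rintro ⟨U, V, hU, hV, hUB, hVB, hUV, hcover⟩
  refine hA.2 ⟨U, V, hU, hV, ?_, ?_, hUV, hAB.trans hcover⟩
  · exact inter_nonempty_of_subset_gClosure hV hAB hBA hUB hUV hcover
  · exact inter_nonempty_of_subset_gClosure hU hAB hBA hVB hUV.symm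
      (hcover.trans (Set.union_comm U V).subset)

end SeqMethod

open SeqMethod

variable {X : Type*} [AddGroup X] [TopologicalSpace X] [IsTopologicalAddGroup X]
  [FirstCountableTopology X] [T2Space X]

theorem gClosure_gConnected (M : SeqMethod X) (hreg : M.Regular)
    (A : Set X) (hA : M.GConnected A) : M.GConnected (M.GClosure A) :=
  hA.of_subset_of_subset_gClosure (M.subset_gClosure_of_regular hreg A) subset_rfl
end
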